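/- Let (X, d, μ) be an Ahlfors regular metric measure space of dimension Q, let Ω be an open subset of X with μ(Ω) < ∞, and let A ⊆ X be nonempty with Ω ⊆ A_δ for some δ > 0. Then the relative distance zeta function ζ_A(s, Ω) = ∫_Ω d(x,A)^{s−Q} dμ(x) is holomorphic on the open half-plane { s ∈ ℂ : Re s > dim̄_B(A, Ω) }, and for every s in this half-plane its complex derivative is ζ_A′(s, Ω) = ∫_Ω d(x,A)^{s−Q} log d(x,A) dμ(x). -/

import Mathlib

open MeasureTheory Metric Filter Set Topology ENNReal

noncomputable section

/-- `(X, d, μ)` is an Ahlfors regular metric measure space of dimension `Q`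
with regularity constant `K`:  `K⁻¹ r^Q ≤ μ(B̄(x,r)) ≤ K r^Q` for all `x` and
all `0 < r ≤ diam X`. -/
def IsAhlfors {X : Type*} [MetricSpace X] [MeasurableSpace X] (μ : Measure X)
    (Q K : ℝ) : Prop :=
  1 ≤ K ∧ ∀ (x : X) (r : ℝ), 0 < r → ENNReal.ofReal r ≤ EMetric.diam (univ : Set X) →
    ENNReal.ofReal (K⁻¹ * r ^ Q) ≤ μ (closedBall x r) ∧
      μ (closedBall x r) ≤ ENNReal.ofReal (K * r ^ Q)

/-- The upper `r`-dimensional Minkowski content of `A`, relative to the ambient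
dimension `Q`:  `M^{*r}(A) = limsup_{t→0⁺} μ(A_t) / t^(Q-r)`, where
`A_t = cthickening t A` is the closed `t`-neighborhood of `A`. -/
def uContent {X : Type*} [MetricSpace X] [MeasurableSpace X] (μ : Measure X)
    (Q r : ℝ) (A : Set X) : ℝ≥0∞ :=
  Filter.limsup (fun t : ℝ => μ (cthickening t A) / ENNReal.ofReal (t ^ (Q - r))) (𝓝[>] 0)

/-- The lower `r`-dimensional Minkowski content of `A`. -/
def lContent {X : Type*} [MetricSpace X] [MeasurableSpace X] (μ : Measure X)
    (Q r : ℝ) (A : Set X) : ℝ≥0∞ :=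
  Filter.liminf (fun t : ℝ => μ (cthickening t A) / ENNReal.ofReal (t ^ (Q - r))) (𝓝[>] 0)

/-- The upper Minkowski dimension `dim̄_B A = inf { r ≥ 0 : M^{*r}(A) = 0 }`. -/
def uDimB {X : Type*} [MetricSpace X] [MeasurableSpace X] (μ : Measure X)
    (Q : ℝ) (A : Set X) : ℝ :=
  sInf {r : ℝ | 0 ≤ r ∧ uContent μ Q r A = 0}

/-- The lower Minkowski dimension. -/
def lDimB {X : Type*} [MetricSpace X] [MeasurableSpace X] (μ : Measure X)
    (Q : ℝ) (A : Set X) : ℝ :=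
  sInf {r : ℝ | 0 ≤ r ∧ lContent μ Q r A = 0}

/-- The upper `r`-dimensional Minkowski content of `A` relative to `Ω`:
`M^{*r}(A, Ω) = limsup_{t→0⁺} μ(A_t ∩ Ω) / t^(Q-r)`. -/
def uContentRel {X : Type*} [MetricSpace X] [MeasurableSpace X] (μ : Measure X)
    (Q r : ℝ) (A Ω : Set X) : ℝ≥0∞ :=
  Filter.limsup (fun t : ℝ => μ (cthickening t A ∩ Ω) / ENNReal.ofReal (t ^ (Q - r)))
    (𝓝[>] 0)

/-- The lower `r`-dimensional Minkowski content of `A` relative to `Ω`. -/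
def lContentRel {X : Type*} [MetricSpace X] [MeasurableSpace X] (μ : Measure X)
    (Q r : ℝ) (A Ω : Set X) : ℝ≥0∞ :=
  Filter.liminf (fun t : ℝ => μ (cthickening t A ∩ Ω) / ENNReal.ofReal (t ^ (Q - r)))
    (𝓝[>] 0)

/-- The relative upper Minkowski dimension `dim̄_B(A, Ω) = inf { r : M^{*r}(A, Ω) = 0 }`. -/
def uDimRel {X : Type*} [MetricSpace X] [MeasurableSpace X] (μ : Measure X)
    (Q : ℝ) (A Ω : Set X) : ℝ :=
  sInf {r : ℝ | uContentRel μ Q r A Ω = 0}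

/-- The relative lower Minkowski dimension. -/
def lDimRel {X : Type*} [MetricSpace X] [MeasurableSpace X] (μ : Measure X)
    (Q : ℝ) (A Ω : Set X) : ℝ :=
  sInf {r : ℝ | lContentRel μ Q r A Ω = 0}

/-!
Since `dim̄_B(A, Ω) < Re s`, some `r < Re s` has `M^{*r}(A, Ω) = 0`, so
`μ(A_t ∩ Ω) ≤ t^(Q-r)` for all small `t`. Summing over the dyadic shells
`t₀/2^(n+1) < d(x,A) ≤ t₀/2^n` then shows that `d(·,A)^e` is integrable on `Ω` for every
`e > r - Q`. Near `s`, `|d^(z-Q) log d|` is dominated by `d^(Re s-Q-2ε) + d^(Re s-Q+2ε)` up to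
a constant, so one may differentiate under the integral sign. The points with `d(x,A) = 0`
are harmless: they form a null set if `r < Q`, and otherwise `0^(z-Q) = 0` for all `z` near `s`.
-/

theorem Metric.mem_cthickening_iff_infDist_le {X : Type*} [MetricSpace X] {A : Set X}
    (hA : A.Nonempty) {x : X} {t : ℝ} (ht : 0 ≤ t) : x ∈ cthickening t A ↔ infDist x A ≤ t := by
  rw [mem_cthickening_iff, infDist, ← ENNReal.le_ofReal_iff_toReal_le (infEDist_ne_top hA) ht]

theorem Real.rpow_le_rpow_add_rpow {d a a₁ a₂ : ℝ} (hd : 0 < d) (h₁ : a₁ ≤ a) (h₂ : a ≤ a₂) :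
    d ^ a ≤ d ^ a₁ + d ^ a₂ := by
  rcases le_or_gt d 1 with hd1 | hd1
  · exact le_add_of_le_of_nonneg (Real.rpow_le_rpow_of_exponent_ge hd hd1 h₁) (by positivity)
  · exact le_add_of_nonneg_of_le (by positivity) (Real.rpow_le_rpow_of_exponent_le hd1.le h₂)

theorem Real.rpow_mul_abs_log_le {d a a₁ a₂ ε : ℝ} (hd : 0 < d) (hε : 0 < ε) (h₁ : a₁ ≤ a)
    (h₂ : a ≤ a₂) : d ^ a * |Real.log d| ≤ ε⁻¹ * (d ^ (a₁ - ε) + d ^ (a₂ + ε)) := by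
  rcases le_or_gt d 1 with hd1 | hd1
  · have hlog : |Real.log d| ≤ ε⁻¹ * d ^ (-ε) := by
      rw [abs_of_nonpos (Real.log_nonpos hd.le hd1), ← Real.log_inv, Real.rpow_neg hd.le,
        ← Real.inv_rpow hd.le, inv_mul_eq_div]
      exact Real.log_le_rpow_div (by positivity) hε
    calc d ^ a * |Real.log d| ≤ d ^ a₁ * (ε⁻¹ * d ^ (-ε)) :=
          mul_le_mul (Real.rpow_le_rpow_of_exponent_ge hd hd1 h₁) hlog (abs_nonneg _)
            (by positivity)
      _ = ε⁻¹ * d ^ (a₁ - ε) := by rw [sub_eq_add_neg, Real.rpow_add hd]; ring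
      _ ≤ ε⁻¹ * (d ^ (a₁ - ε) + d ^ (a₂ + ε)) := by
          gcongr; exact le_add_of_nonneg_right (by positivity)
  · have hlog : |Real.log d| ≤ ε⁻¹ * d ^ ε := by
      rw [abs_of_nonneg (Real.log_nonneg hd1.le), inv_mul_eq_div]
      exact Real.log_le_rpow_div hd.le hε
    calc d ^ a * |Real.log d| ≤ d ^ a₂ * (ε⁻¹ * d ^ ε) :=
          mul_le_mul (Real.rpow_le_rpow_of_exponent_le hd1.le h₂) hlog (abs_nonneg _)
            (by positivity)
      _ = ε⁻¹ * d ^ (a₂ + ε) := by rw [Real.rpow_add hd]; ring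
      _ ≤ ε⁻¹ * (d ^ (a₁ - ε) + d ^ (a₂ + ε)) := by
          gcongr; exact le_add_of_nonneg_left (by positivity)

theorem Complex.re_mem_Ioo_of_mem_ball {w z : ℂ} {ε : ℝ} (hz : z ∈ ball w ε) :
    w.re - ε < z.re ∧ z.re < w.re + ε := by
  have h : |z.re - w.re| < ε :=
    (Complex.abs_re_le_norm (z - w)).trans_lt (mem_ball_iff_norm.mp hz)
  constructor <;> linarith [abs_lt.mp h]

theorem Complex.norm_ofReal_cpow_le_rpow_add_rpow {d a₁ a₂ : ℝ} (hd : 0 ≤ d) {w : ℂ}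
    (h₀ : d ≠ 0 ∨ w ≠ 0) (h₁ : a₁ ≤ w.re) (h₂ : w.re ≤ a₂) :
    ‖(d : ℂ) ^ w‖ ≤ d ^ a₁ + d ^ a₂ := by
  rcases hd.lt_or_eq with hd | rfl
  · rw [Complex.norm_cpow_eq_rpow_re_of_pos hd]
    exact Real.rpow_le_rpow_add_rpow hd h₁ h₂
  · rw [Complex.ofReal_zero, Complex.zero_cpow (h₀.resolve_left (not_ne_iff.mpr rfl)), norm_zero]
    positivity

theorem Complex.norm_ofReal_cpow_mul_log_le {d ε : ℝ} (hd : 0 ≤ d) (hε : 0 < ε) {w z : ℂ}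
    (hz : z ∈ ball w ε) :
    ‖(d : ℂ) ^ z * (Real.log d : ℂ)‖ ≤ ε⁻¹ * (d ^ (w.re - 2 * ε) + d ^ (w.re + 2 * ε)) := by
  rcases hd.lt_or_eq with hd | rfl
  · obtain ⟨hz₁, hz₂⟩ := Complex.re_mem_Ioo_of_mem_ball hz
    rw [norm_mul, Complex.norm_cpow_eq_rpow_re_of_pos hd, Complex.norm_real, Real.norm_eq_abs,
      show w.re - 2 * ε = w.re - ε - ε by ring, show w.re + 2 * ε = w.re + ε + ε by ring]
    exact Real.rpow_mul_abs_log_le hd hε hz₁.le hz₂.le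
  · rw [Real.log_zero, Complex.ofReal_zero, mul_zero, norm_zero]
    positivity

theorem hasDerivAt_integral_ofReal_cpow {α : Type*} [MeasurableSpace α] {μ : Measure α}
    {f : α → ℝ} (hf : Measurable f) (hf₀ : ∀ x, 0 ≤ f x) {w : ℂ} {ε : ℝ} (hε : 0 < ε)
    (hint₁ : Integrable (fun x => f x ^ (w.re - 2 * ε)) μ)
    (hint₂ : Integrable (fun x => f x ^ (w.re + 2 * ε)) μ)
    -- `(0 : ℂ) ^ z` jumps from `0` to `1` at `z = 0`, so zeros of `f` need `0 ∉ ball w ε`.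
    (hzero : ∀ᵐ x ∂μ, f x ≠ 0 ∨ ε ≤ w.re) :
    HasDerivAt (fun z : ℂ => ∫ x, (f x : ℂ) ^ z ∂μ)
      (∫ x, (f x : ℂ) ^ w * (Real.log (f x) : ℂ) ∂μ) w := by
  have hmeas : ∀ z : ℂ, Measurable fun x => (f x : ℂ) ^ z := fun z =>
    (Complex.measurable_ofReal.comp hf).pow_const z
  have hne : ∀ z ∈ ball w ε, ∀ x, f x ≠ 0 ∨ ε ≤ w.re → f x ≠ 0 ∨ z ≠ 0 := by
    rintro z hz x (hx | hw)
    · exact Or.inl hx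
    · refine Or.inr fun hz0 => ?_
      have := (Complex.re_mem_Ioo_of_mem_ball hz).1
      rw [hz0, Complex.zero_re] at this
      linarith
  have hFw : Integrable (fun x => (f x : ℂ) ^ w) μ := by
    refine (hint₁.add hint₂).mono' (hmeas w).aestronglyMeasurable ?_
    filter_upwards [hzero] with x hx
    exact Complex.norm_ofReal_cpow_le_rpow_add_rpow (hf₀ x)
      (hne w (mem_ball_self hε) x hx) (by linarith) (by linarith)
  have hF'w : Measurable fun x => (f x : ℂ) ^ w * (Real.log (f x) : ℂ) :=
    (hmeas w).mul (Complex.measurable_ofReal.comp (Real.measurable_log.comp hf))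
  refine (hasDerivAt_integral_of_dominated_loc_of_deriv_le (ball_mem_nhds w hε)
    (Eventually.of_forall fun z => (hmeas z).aestronglyMeasurable) hFw hF'w.aestronglyMeasurable
    (ae_of_all _ fun x z hz => Complex.norm_ofReal_cpow_mul_log_le (hf₀ x) hε hz)
    ((hint₁.add hint₂).const_mul ε⁻¹) ?_).2
  filter_upwards [hzero] with x hx z hz
  rw [Complex.ofReal_log (hf₀ x)]
  exact (Complex.hasStrictDerivAt_const_cpow
    ((hne z hz x hx).imp_left Complex.ofReal_ne_zero.mpr)).hasDerivAt

theorem exists_div_two_pow_lt_le {t₀ y : ℝ} (hy : 0 < y) (hyt : y ≤ t₀) :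
    ∃ n : ℕ, t₀ / 2 ^ (n + 1) < y ∧ y ≤ t₀ / 2 ^ n := by
  obtain ⟨n, hn, hn'⟩ := exists_nat_pow_near ((one_le_div hy).mpr hyt) one_lt_two
  refine ⟨n, ?_, ?_⟩
  · rwa [div_lt_iff₀ (by positivity), mul_comm, ← div_lt_iff₀ hy]
  · rwa [le_div_iff₀ (by positivity), mul_comm, ← le_div_iff₀ hy]

theorem ofReal_rpow_le_add_tsum_indicator {t₀ e y : ℝ} (ht₀ : 0 < t₀) (he : e < 0) (hy : 0 ≤ y) :
    ENNReal.ofReal (y ^ e) ≤ ENNReal.ofReal (t₀ ^ e) +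
      ∑' n : ℕ,
        (Iic (t₀ / 2 ^ n)).indicator (fun _ => ENNReal.ofReal ((t₀ / 2 ^ (n + 1)) ^ e)) y := by
  rcases hy.lt_or_eq with hy | rfl
  · rcases lt_or_ge t₀ y with hty | hyt
    · exact le_add_right (ENNReal.ofReal_le_ofReal (Real.rpow_le_rpow_of_nonpos ht₀ hty.le he.le))
    · obtain ⟨n, hn, hn'⟩ := exists_div_two_pow_lt_le hy hyt
      refine le_add_left (le_trans ?_ (ENNReal.le_tsum n))
      rw [indicator_of_mem (mem_Iic.mpr hn')]
      exact ENNReal.ofReal_le_ofReal (Real.rpow_le_rpow_of_nonpos (by positivity) hn.le he.le)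
  · simp [Real.zero_rpow he.ne]

theorem summable_div_two_pow_rpow_mul {t₀ a e : ℝ} (ht₀ : 0 < t₀) (hae : 0 < a + e) :
    Summable fun n : ℕ => (t₀ / 2 ^ (n + 1)) ^ e * (t₀ / 2 ^ n) ^ a := by
  have hterm : ∀ n : ℕ, (t₀ / 2 ^ (n + 1)) ^ e * (t₀ / 2 ^ n) ^ a
      = t₀ ^ (a + e) / 2 ^ e * ((2 ^ (a + e))⁻¹) ^ n := by
    intro n
    rw [pow_succ, ← div_div, Real.div_rpow (by positivity) zero_le_two, div_mul_eq_mul_div,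
      ← Real.rpow_add (by positivity), add_comm e, Real.div_rpow ht₀.le (by positivity),
      ← Real.rpow_pow_comm zero_le_two, inv_pow]
    field_simp
  have hq : 1 < (2 : ℝ) ^ (a + e) := Real.one_lt_rpow one_lt_two hae
  exact ((summable_geometric_of_lt_one (by positivity) (inv_lt_one_of_one_lt₀ hq)).mul_left
    (t₀ ^ (a + e) / 2 ^ e)).congr fun n => (hterm n).symm

section SublevelBound

variable {α : Type*} [MeasurableSpace α] {μ : Measure α} {f : α → ℝ} {a : ℝ}

theorem lintegral_ofReal_rpow_lt_top_of_measure_le [IsFiniteMeasure μ] (hf : Measurable f)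
    (hf₀ : ∀ x, 0 ≤ f x) (hbd : ∀ᶠ t in 𝓝[>] 0, μ {x | f x ≤ t} ≤ ENNReal.ofReal (t ^ a))
    {e : ℝ} (hae : 0 < a + e) (he : e < 0) : ∫⁻ x, ENNReal.ofReal (f x ^ e) ∂μ < ∞ := by
  obtain ⟨t₀, ht₀ : 0 < t₀, hsub⟩ := mem_nhdsGT_iff_exists_Ioc_subset.mp hbd
  set c : ℕ → ℝ≥0∞ := fun n => ENNReal.ofReal ((t₀ / 2 ^ (n + 1)) ^ e)
  have hscale : ∀ n : ℕ, μ (f ⁻¹' Iic (t₀ / 2 ^ n)) ≤ ENNReal.ofReal ((t₀ / 2 ^ n) ^ a) := fun n =>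
    hsub ⟨by positivity, div_le_self ht₀.le (one_le_pow₀ one_le_two)⟩
  calc ∫⁻ x, ENNReal.ofReal (f x ^ e) ∂μ
      ≤ ∫⁻ x, ENNReal.ofReal (t₀ ^ e) +
          ∑' n, (Iic (t₀ / 2 ^ n)).indicator (fun _ => c n) (f x) ∂μ :=
        lintegral_mono fun x => ofReal_rpow_le_add_tsum_indicator ht₀ he (hf₀ x)
    _ = ENNReal.ofReal (t₀ ^ e) * μ univ + ∑' n, c n * μ (f ⁻¹' Iic (t₀ / 2 ^ n)) := by
        rw [lintegral_add_left measurable_const, lintegral_const,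
          lintegral_tsum (f := fun n x => (Iic (t₀ / 2 ^ n)).indicator (fun _ => c n) (f x))
            fun n => ((measurable_const.indicator measurableSet_Iic).comp hf).aemeasurable]
        simp_rw [lintegral_indicator_const_comp hf measurableSet_Iic]
    _ ≤ ENNReal.ofReal (t₀ ^ e) * μ univ +
          ∑' n : ℕ, ENNReal.ofReal ((t₀ / 2 ^ (n + 1)) ^ e * (t₀ / 2 ^ n) ^ a) := by
        gcongr with n
        rw [ENNReal.ofReal_mul (by positivity)]
        exact mul_le_mul_right (hscale n) _
    _ < ∞ := by
        rw [← ENNReal.ofReal_tsum_of_nonneg (fun n => by positivity)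
          (summable_div_two_pow_rpow_mul ht₀ hae)]
        exact ENNReal.add_lt_top.mpr ⟨ENNReal.mul_lt_top ENNReal.ofReal_lt_top
          (measure_lt_top μ univ), ENNReal.ofReal_lt_top⟩

theorem integrable_rpow_of_measure_le [IsFiniteMeasure μ] (hf : Measurable f)
    (hf₀ : ∀ x, 0 ≤ f x) {δ : ℝ} (hfδ : ∀ᵐ x ∂μ, f x ≤ δ)
    (hbd : ∀ᶠ t in 𝓝[>] 0, μ {x | f x ≤ t} ≤ ENNReal.ofReal (t ^ a))
    {e : ℝ} (hae : 0 < a + e) : Integrable (fun x => f x ^ e) μ := by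
  have hmeas : AEStronglyMeasurable (fun x => f x ^ e) μ := (hf.pow_const e).aestronglyMeasurable
  rcases le_or_gt 0 e with he | he
  · refine (integrable_const (δ ^ e)).mono' hmeas (hfδ.mono fun x hx => ?_)
    rw [Real.norm_of_nonneg (Real.rpow_nonneg (hf₀ x) e)]
    exact Real.rpow_le_rpow (hf₀ x) hx he
  · refine ⟨hmeas, (hasFiniteIntegral_iff_ofReal (ae_of_all _ fun x => ?_)).mpr
      (lintegral_ofReal_rpow_lt_top_of_measure_le hf hf₀ hbd hae he)⟩
    exact Real.rpow_nonneg (hf₀ x) e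

theorem tendsto_ofReal_rpow_nhdsGT_zero {p : ℝ} (hp : 0 < p) :
    Tendsto (fun t : ℝ => ENNReal.ofReal (t ^ p)) (𝓝[>] 0) (𝓝 0) := by
  simpa using ENNReal.tendsto_ofReal
    ((tendsto_id.mono_left nhdsWithin_le_nhds).rpow_const_nhds_zero hp)

theorem ae_ne_zero_of_measure_le (hbd : ∀ᶠ t in 𝓝[>] 0, μ {x | f x ≤ t} ≤ ENNReal.ofReal (t ^ a))
    (ha : 0 < a) : ∀ᵐ x ∂μ, f x ≠ 0 := by
  refine nonpos_iff_eq_zero.mp (ge_of_tendsto (tendsto_ofReal_rpow_nhdsGT_zero ha) ?_)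
  filter_upwards [hbd, self_mem_nhdsWithin] with t ht (htpos : 0 < t)
  exact (measure_mono fun x (hx : ¬f x ≠ 0) => (not_not.mp hx).trans_le htpos.le).trans ht

end SublevelBound

section RelativeContent

variable {X : Type*} [MetricSpace X] [MeasurableSpace X] {μ : Measure X} {Q r : ℝ} {A Ω : Set X}

theorem uContentRel_eq_zero_of_lt (hΩ : μ Ω ≠ ∞) (hQr : Q < r) : uContentRel μ Q r A Ω = 0 := by
  have hle : ∀ᶠ t in 𝓝[>] (0 : ℝ), μ (cthickening t A ∩ Ω) / ENNReal.ofReal (t ^ (Q - r))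
      ≤ μ Ω * ENNReal.ofReal (t ^ (r - Q)) := by
    filter_upwards [self_mem_nhdsWithin] with t (ht : 0 < t)
    rw [div_eq_mul_inv, ← ENNReal.ofReal_inv_of_pos (by positivity), ← Real.rpow_neg ht.le,
      neg_sub]
    exact mul_le_mul_left (measure_mono inter_subset_right) _
  have hlim := ENNReal.Tendsto.const_mul (tendsto_ofReal_rpow_nhdsGT_zero (sub_pos.mpr hQr))
    (Or.inr hΩ)
  rw [mul_zero] at hlim
  exact nonpos_iff_eq_zero.mp ((limsup_le_limsup hle).trans_eq hlim.limsup_eq)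

theorem exists_lt_uContentRel_eq_zero (hΩ : μ Ω ≠ ∞) {σ : ℝ} (hσ : uDimRel μ Q A Ω < σ) :
    ∃ r < σ, uContentRel μ Q r A Ω = 0 := by
  by_contra! h
  exact hσ.not_ge (le_csInf ⟨Q + 1, uContentRel_eq_zero_of_lt hΩ (lt_add_one Q)⟩
    fun r hr => not_lt.mp fun hrσ => h r hrσ hr)

theorem eventually_measure_cthickening_inter_le (h : uContentRel μ Q r A Ω = 0) :
    ∀ᶠ t in 𝓝[>] 0, μ (cthickening t A ∩ Ω) ≤ ENNReal.ofReal (t ^ (Q - r)) := by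
  have hlt : uContentRel μ Q r A Ω < 1 := h ▸ zero_lt_one
  filter_upwards [eventually_lt_of_limsup_lt hlt, self_mem_nhdsWithin] with t ht (htpos : 0 < t)
  simpa using (ENNReal.div_le_iff (by positivity) ENNReal.ofReal_ne_top).mp ht.le

theorem eventually_restrict_measure_infDist_le [OpensMeasurableSpace X] (hA : A.Nonempty)
    (h : uContentRel μ Q r A Ω = 0) :
    ∀ᶠ t in 𝓝[>] 0, μ.restrict Ω {x | infDist x A ≤ t} ≤ ENNReal.ofReal (t ^ (Q - r)) := by
  filter_upwards [eventually_measure_cthickening_inter_le h, self_mem_nhdsWithin]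
    with t ht (htpos : 0 < t)
  rw [Measure.restrict_apply (measurableSet_le (continuous_infDist_pt A).measurable
    measurable_const)]
  exact (measure_mono (inter_subset_inter_left _ fun x hx =>
    (mem_cthickening_iff_infDist_le hA htpos.le).mpr hx)).trans ht

end RelativeContent

theorem stmt16_general {X : Type*} [MetricSpace X] [MeasurableSpace X] [BorelSpace X]
    (μ : Measure X) (Q : ℝ)
    (Ω : Set X) (hΩfin : μ Ω < ⊤)
    (A : Set X) (hne : A.Nonempty)
    (δ : ℝ) (hδ : 0 < δ) (hΩA : Ω ⊆ cthickening δ A)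
    (s : ℂ) (hs : uDimRel μ Q A Ω < s.re) :
    HasDerivAt
      (fun z : ℂ => ∫ x in Ω, (infDist x A : ℂ) ^ (z - (Q : ℂ)) ∂μ)
      (∫ x in Ω, (infDist x A : ℂ) ^ (s - (Q : ℂ)) * (Real.log (infDist x A) : ℂ) ∂μ)
      s := by
  obtain ⟨r, hrs, hr⟩ := exists_lt_uContentRel_eq_zero hΩfin.ne hs
  have : IsFiniteMeasure (μ.restrict Ω) := isFiniteMeasure_restrict.mpr hΩfin.ne
  have hd : Measurable fun x => infDist x A := (continuous_infDist_pt A).measurable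
  have hbd := eventually_restrict_measure_infDist_le hne hr
  have hdδ : ∀ᵐ x ∂μ.restrict Ω, infDist x A ≤ δ :=
    (ae_restrict_iff (measurableSet_le hd measurable_const)).mpr <| ae_of_all _ fun x hx =>
      (mem_cthickening_iff_infDist_le hne hδ.le).mp (hΩA hx)
  have hint : ∀ e, r - Q < e → Integrable (fun x => infDist x A ^ e) (μ.restrict Ω) :=
    fun e he => integrable_rpow_of_measure_le hd (fun _ => infDist_nonneg) hdδ hbd (by linarith)
  set ε := (s.re - r) / 3 with hε
  have hre : (s - Q).re = s.re - Q := by simp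
  have hzero : ∀ᵐ x ∂μ.restrict Ω, infDist x A ≠ 0 ∨ ε ≤ (s - Q).re := by
    rcases lt_or_ge r Q with hrQ | hQr
    · exact (ae_ne_zero_of_measure_le hbd (sub_pos.mpr hrQ)).mono fun _ => Or.inl
    · exact ae_of_all _ fun _ => Or.inr (by linarith)
  have hderiv := hasDerivAt_integral_ofReal_cpow hd (fun _ => infDist_nonneg) (by linarith)
    (hint _ (by linarith)) (hint _ (by linarith)) hzero
  exact hderiv.comp_sub_const s Q

/-- The relative distance zeta function `ζ_A(s, Ω) = ∫_Ω d(x,A)^(s-Q) dμ(x)` of a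
relative fractal drum `(A, Ω)` is holomorphic on `{ Re s > dim̄_B(A, Ω) }` with
derivative `∫_Ω d(x,A)^(s-Q) log d(x,A) dμ(x)`. -/
theorem stmt16 {X : Type*} [MetricSpace X] [MeasurableSpace X] [BorelSpace X]
    (μ : Measure X) (Q K : ℝ) (hQ : 0 < Q) (hreg : IsAhlfors μ Q K)
    (Ω : Set X) (hΩopen : IsOpen Ω) (hΩfin : μ Ω < ⊤)
    (A : Set X) (hne : A.Nonempty)
    (δ : ℝ) (hδ : 0 < δ) (hΩA : Ω ⊆ cthickening δ A)
    (s : ℂ) (hs : uDimRel μ Q A Ω < s.re) :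
    HasDerivAt
      (fun z : ℂ => ∫ x in Ω, (infDist x A : ℂ) ^ (z - (Q : ℂ)) ∂μ)
      (∫ x in Ω, (infDist x A : ℂ) ^ (s - (Q : ℂ)) * (Real.log (infDist x A) : ℂ) ∂μ)
      s :=
  stmt16_general μ Q Ω hΩfin A hne δ hδ hΩA s hs

end
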